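/- arXiv:2504.16375 — 3 statements merged into one kernel-verified Lean document; each statement's English description precedes it below -/
import Mathlib

section
/- Let G₄ be the m₂×m₂ lower shift matrix scaled by a nonzero scalar s over a field. With respect to the trace bilinear form ⟨M₁,M₂⟩ = Tr(M₁M₂) on m₂×m₂ matrices, the image of ad_{G₄} equals the orthogonal complement of the kernel of ad_{G₄}. -/
/-!
`ad_A` is skew-adjoint for the trace form, because `Tr(⁅A, X⁆ Y) = -Tr(X ⁅A, Y⁆)`, so its range is
orthogonal to its kernel. The trace form is nondegenerate, so the orthogonal complement of the
kernel has dimension `dim - dim ker = dim range`, and the inclusion is an equality.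
-/

/-- The m₂×m₂ lower shift matrix scaled by `s`: entries `s` at positions (i, i-1). -/
def lowerShift (m₂ : ℕ) (K : Type*) [Field K] (s : K) : Matrix (Fin m₂) (Fin m₂) K :=
  Matrix.of fun i j => if (i : ℕ) = (j : ℕ) + 1 then s else 0

open LinearMap (BilinForm)

theorem LinearMap.BilinForm.range_eq_orthogonal_ker_of_isSkewAdjoint {K V : Type*} [Field K]
    [AddCommGroup V] [Module K V] [FiniteDimensional K V] {B : BilinForm K V}
    (hB : B.Nondegenerate) {f : V →ₗ[K] V} (hf : LinearMap.IsSkewAdjoint B f) :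
    LinearMap.range f = B.orthogonal (LinearMap.ker f) := by
  have hle : LinearMap.range f ≤ B.orthogonal (LinearMap.ker f) := by
    rintro _ ⟨y, rfl⟩ z hz
    have := hf z y
    rw [LinearMap.mem_ker.mp hz, map_zero, LinearMap.zero_apply] at this
    simpa using this.symm
  refine Submodule.eq_of_le_of_finrank_le hle ?_
  rw [finrank_orthogonal hB, ← f.finrank_range_add_finrank_ker]
  lia

namespace Matrix

variable {n R : Type*} [Fintype n]

def traceForm [CommSemiring R] : BilinForm R (Matrix n n R) :=
  (LinearMap.mul R (Matrix n n R)).compr₂ (traceLinearMap n R R)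

@[simp]
theorem traceForm_apply [CommSemiring R] (M N : Matrix n n R) : traceForm M N = trace (M * N) :=
  rfl

theorem traceForm_nondegenerate [CommSemiring R] [DecidableEq n] :
    (traceForm : BilinForm R (Matrix n n R)).Nondegenerate := by
  refine ⟨fun M hM => ?_, fun M hM => ?_⟩
  · exact ext_iff_trace_mul_right.mpr fun N => by simpa using hM N
  · exact ext_iff_trace_mul_left.mpr fun N => by simpa using hM N

def ad [CommRing R] [DecidableEq n] (A : Matrix n n R) : Module.End R (Matrix n n R) :=
  LinearMap.mulLeft R A - LinearMap.mulRight R A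

@[simp]
theorem ad_apply [CommRing R] [DecidableEq n] (A M : Matrix n n R) : ad A M = A * M - M * A :=
  rfl

theorem isSkewAdjoint_traceForm_ad [CommRing R] [DecidableEq n] (A : Matrix n n R) :
    LinearMap.IsSkewAdjoint traceForm (ad A) := by
  intro X Y
  have h : trace (X * A * Y) = trace (X * (A * Y)) := by rw [mul_assoc]
  have h' : trace (A * X * Y) = trace (X * (Y * A)) := by
    rw [mul_assoc, trace_mul_comm, mul_assoc]
  simp only [Pi.neg_apply, ad_apply, traceForm_apply, sub_mul, mul_neg, mul_sub, trace_neg,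
    trace_sub, h, h']
  ring

end Matrix

theorem image_ad_lowerShift_eq_orthogonal_kernel_general (m₂ : ℕ)
    (K : Type*) [Field K] (s : K) :
    ∀ M₁ : Matrix (Fin m₂) (Fin m₂) K,
      (∃ M₂ : Matrix (Fin m₂) (Fin m₂) K,
          M₁ = lowerShift m₂ K s * M₂ - M₂ * lowerShift m₂ K s) ↔
        (∀ M₃ : Matrix (Fin m₂) (Fin m₂) K,
          lowerShift m₂ K s * M₃ - M₃ * lowerShift m₂ K s = 0 →
            Matrix.trace (M₃ * M₁) = 0) := by
  intro M₁
  have h := SetLike.ext_iff.mp (LinearMap.BilinForm.range_eq_orthogonal_ker_of_isSkewAdjoint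
    Matrix.traceForm_nondegenerate (Matrix.isSkewAdjoint_traceForm_ad (lowerShift m₂ K s))) M₁
  simpa [eq_comm] using h

/-- With respect to the trace bilinear form `⟨M₁,M₂⟩ = Tr(M₁M₂)`, the image of
`ad_{G₄}` equals the orthogonal complement of the kernel of `ad_{G₄}`. -/
theorem image_ad_lowerShift_eq_orthogonal_kernel (m₂ : ℕ) (hm₂ : 1 ≤ m₂)
    (K : Type*) [Field K] (s : K) (hs : s ≠ 0) :
    ∀ M₁ : Matrix (Fin m₂) (Fin m₂) K,
      (∃ M₂ : Matrix (Fin m₂) (Fin m₂) K,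
          M₁ = lowerShift m₂ K s * M₂ - M₂ * lowerShift m₂ K s) ↔
        (∀ M₃ : Matrix (Fin m₂) (Fin m₂) K,
          lowerShift m₂ K s * M₃ - M₃ * lowerShift m₂ K s = 0 →
            Matrix.trace (M₃ * M₁) = 0) :=
  image_ad_lowerShift_eq_orthogonal_kernel_general m₂ K s
end

section
/- Fix positive integers m₁, m₂ with l = m₁ + m₂, and a nonzero scalar s. The formal series ψ_A(z,s) = (s/m₁)^{(z−1/2)/m₁} · ∑_{j≥0} (−1)^j s^{(l/m₁)j} / (m₁^{(m₂/m₁)j} m₂^j j! Γ((z−1/2+m₂j)/m₁ + 1)) satisfies the linear difference equation ψ(z−m₁) − (1/s)(z−1/2)ψ(z) + ψ(z+m₂) = 0. -/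
/-!
With `w = (z - 1/2)/m₁`, `b = m₂/m₁` and `x = -s^{1+b}/(m₁^b m₂)`, the function is
`ψ(z) = (s/m₁)^w φ(w)`, where `φ(w) = ∑ xʲ / (j! Γ(w + bj + 1))` is Wright's function
`φ(b, w + 1; x)`. The shifts `z ↦ z - m₁` and `z ↦ z + m₂` become `w ↦ w - 1` and `w ↦ w + b`,
and the difference equation reduces to the contiguity relation `φ(w - 1) = w φ(w) + b x φ(w + b)`:
termwise, `1/Γ(v) = v/Γ(v + 1)` splits the term of `φ(w - 1)` as `(w + bj)` times that of `φ(w)`,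
and reindexing `j ↦ j + 1` turns the part carrying `j` into `x φ(w + b)`. All series converge
absolutely because `1/Γ` is bounded on every horizontal half-line `Re v ≥ r`.
-/

open Complex
open scoped Nat

theorem exists_norm_inv_Gamma_le_of_im_eq (t r : ℝ) :
    ∃ C, ∀ v : ℂ, v.im = t → r ≤ v.re → ‖(Gamma v)⁻¹‖ ≤ C := by
  obtain ⟨C, hC⟩ := (isCompact_Icc (a := min r 1) (b := 2)).image
    (f := fun σ : ℝ => (σ : ℂ) + t * I) (by fun_prop) |>.exists_bound_of_continuousOn
    differentiable_one_div_Gamma.continuous.continuousOn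
  -- `C` bounds `1/Γ` on the segment `min r 1 ≤ Re v ≤ 2`; moving right by one multiplies `1/Γ`
  -- by `1/(v - 1)`, of norm at most one once `Re v ≥ 2`.
  have key : ∀ n : ℕ, ∀ v : ℂ, v.im = t → min r 1 ≤ v.re → v.re ≤ n + 2 →
      ‖(Gamma v)⁻¹‖ ≤ C := by
    intro n
    induction n with
    | zero =>
      intro v him hlo hhi
      refine hC v ⟨v.re, ⟨hlo, by simpa using hhi⟩, ?_⟩
      apply Complex.ext <;> simp [him]
    | succ n ih =>
      intro v him hlo hhi
      by_cases hv : v.re ≤ n + 2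
      · exact ih v him hlo hv
      have hre : (v - 1).re = v.re - 1 := by simp
      have hre_ge : 1 ≤ (v - 1).re := by rw [hre]; linarith [(n.cast_nonneg : (0 : ℝ) ≤ n)]
      calc ‖(Gamma v)⁻¹‖ ≤ ‖v - 1‖ * ‖(Gamma v)⁻¹‖ :=
            le_mul_of_one_le_left (norm_nonneg _) (hre_ge.trans (re_le_norm _))
        _ = ‖(Gamma (v - 1))⁻¹‖ := by
          rw [one_div_Gamma_eq_self_mul_one_div_Gamma_add_one (v - 1), sub_add_cancel, norm_mul]
        _ ≤ C := ih (v - 1) (by simp [him]) (by linarith [min_le_right r 1])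
          (by rw [hre]; push_cast at hhi; linarith)
  exact ⟨C, fun v him hlo ↦ key ⌈v.re⌉₊ v him (le_trans (min_le_left _ _) hlo)
    (by linarith [Nat.le_ceil v.re])⟩

theorem div_ofReal_cpow {r : ℝ} (hr : 0 < r) (x y : ℂ) : (x / r) ^ y = x ^ y / (r : ℂ) ^ y := by
  rcases eq_or_ne x 0 with rfl | hx
  · rcases eq_or_ne y 0 with rfl | hy
    · simp
    · simp [zero_cpow hy]
  have hr' : (r : ℂ) ≠ 0 := ofReal_ne_zero.mpr hr.ne'
  rw [cpow_def_of_ne_zero (div_ne_zero hx hr'), cpow_def_of_ne_zero hx, cpow_def_of_ne_zero hr',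
    div_eq_mul_inv x, ← ofReal_inv, log_mul_ofReal _ (inv_pos.mpr hr) _ hx, Real.log_inv,
    ← ofReal_log hr.le, ← exp_sub]
  congr 1
  push_cast
  ring

noncomputable section

def wrightTerm (b : ℝ) (x w : ℂ) (j : ℕ) : ℂ := x ^ j / (j ! * Gamma (w + b * j + 1))

def wright (b : ℝ) (x w : ℂ) : ℂ := ∑' j, wrightTerm b x w j

end

section Wright

variable {b : ℝ} (x w : ℂ)

theorem summable_wrightTerm (hb : 0 ≤ b) : Summable (wrightTerm b x w) := by
  obtain ⟨C, hC⟩ := exists_norm_inv_Gamma_le_of_im_eq w.im (w.re + 1)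
  refine ((Real.summable_pow_div_factorial ‖x‖).mul_right C).of_norm_bounded fun j ↦ ?_
  have hΓ : ‖(Gamma (w + b * j + 1))⁻¹‖ ≤ C :=
    hC _ (by simp) (by simpa using mul_nonneg hb j.cast_nonneg)
  rw [wrightTerm, div_eq_mul_inv, mul_inv, ← mul_assoc, norm_mul, ← div_eq_mul_inv, norm_div,
    norm_pow, norm_natCast]
  exact mul_le_mul_of_nonneg_left hΓ (by positivity)

theorem wrightTerm_sub_one (j : ℕ) :
    wrightTerm b x (w - 1) j = (w + b * j) * wrightTerm b x w j := by
  simp only [wrightTerm, div_eq_mul_inv, mul_inv, show w - 1 + b * j + 1 = w + b * j by ring,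
    one_div_Gamma_eq_self_mul_one_div_Gamma_add_one (w + b * j)]
  ring

theorem natCast_add_one_mul_wrightTerm_succ (j : ℕ) :
    (j + 1) * wrightTerm b x w (j + 1) = x * wrightTerm b x (w + b) j := by
  have hj : (j + 1 : ℂ) ≠ 0 := Nat.cast_add_one_ne_zero j
  simp only [wrightTerm, Nat.factorial_succ, Nat.cast_mul, Nat.cast_succ,
    show w + b * (j + 1) + 1 = w + b + b * j + 1 by ring, div_eq_mul_inv, mul_inv]
  field_simp
  ring

theorem wright_sub_one (hb : 0 ≤ b) :
    wright b x (w - 1) = w * wright b x w + b * x * wright b x (w + b) := by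
  have hS := summable_wrightTerm x w hb
  have hS' : Summable fun j : ℕ ↦ (j : ℂ) * wrightTerm b x w j := by
    rw [← summable_nat_add_iff 1]
    simpa [natCast_add_one_mul_wrightTerm_succ] using (summable_wrightTerm x (w + b) hb).mul_left x
  have hshift : ∑' j : ℕ, (j : ℂ) * wrightTerm b x w j = x * wright b x (w + b) := by
    rw [hS'.tsum_eq_zero_add, wright, ← tsum_mul_left]
    simp [natCast_add_one_mul_wrightTerm_succ]
  calc wright b x (w - 1)
      = ∑' j : ℕ, (w * wrightTerm b x w j + b * ((j : ℂ) * wrightTerm b x w j)) :=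
        tsum_congr fun j ↦ by rw [wrightTerm_sub_one]; ring
    _ = w * wright b x w + b * x * wright b x (w + b) := by
        rw [(hS.mul_left w).tsum_add (hS'.mul_left (b : ℂ)), tsum_mul_left, tsum_mul_left, hshift,
          ← wright]
        ring

end Wright

/-- The formal quasi-wave function
`ψ_A(z,s) = (s/m₁)^{(z−1/2)/m₁} ∑_{j≥0} (−1)^j s^{(l/m₁)j} /
  (m₁^{(m₂/m₁)j} m₂^j j! Γ((z−1/2+m₂j)/m₁+1))`
satisfies the linear difference equation
`ψ(z−m₁) − (1/s)(z−1/2)ψ(z) + ψ(z+m₂) = 0`. -/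
theorem psiA_satisfies_wave_equation (m₁ m₂ : ℕ) (hm₁ : 0 < m₁) (hm₂ : 0 < m₂)
    (s : ℂ) (hs : s ≠ 0) (ψ : ℂ → ℂ)
    (hψ : ∀ z : ℂ, ψ z =
      ((s / (m₁ : ℂ)) ^ ((z - 1/2) / (m₁ : ℂ))) *
        ∑' j : ℕ, ((-1 : ℂ) ^ j * s ^ ((((m₁ : ℂ) + (m₂ : ℂ)) / (m₁ : ℂ)) * (j : ℂ))) /
          ((m₁ : ℂ) ^ (((m₂ : ℂ) / (m₁ : ℂ)) * (j : ℂ)) * (m₂ : ℂ) ^ j *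
            (j.factorial : ℂ) *
            Complex.Gamma ((z - 1/2 + (m₂ : ℂ) * (j : ℂ)) / (m₁ : ℂ) + 1))) :
    ∀ z : ℂ, ψ (z - m₁) - (1 / s) * (z - 1/2) * ψ z + ψ (z + m₂) = 0 := by
  have hm₁' : (m₁ : ℂ) ≠ 0 := Nat.cast_ne_zero.mpr hm₁.ne'
  have hm₂' : (m₂ : ℂ) ≠ 0 := Nat.cast_ne_zero.mpr hm₂.ne'
  have hb : (((m₂ / m₁ : ℝ)) : ℂ) = m₂ / m₁ := by push_cast; rfl
  set x : ℂ := -(s * s ^ ((m₂ : ℂ) / m₁)) / ((m₁ : ℂ) ^ ((m₂ : ℂ) / m₁) * m₂) with hx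
  have hψ_wright (z : ℂ) :
      ψ z = (s / m₁) ^ ((z - 1/2) / m₁) * wright (m₂ / m₁) x ((z - 1/2) / m₁) := by
    rw [hψ, wright]
    congr 1
    refine tsum_congr fun j ↦ ?_
    rw [wrightTerm, hb, cpow_mul_nat, cpow_mul_nat, add_div, div_self hm₁', cpow_add _ _ hs,
      cpow_one, show (z - 1/2 + m₂ * j) / m₁ = (z - 1/2) / m₁ + m₂ / m₁ * j by ring, hx]
    ring
  have hpow : (s / m₁) ^ ((m₂ : ℂ) / m₁) = s ^ ((m₂ : ℂ) / m₁) / (m₁ : ℂ) ^ ((m₂ : ℂ) / m₁) := by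
    exact_mod_cast div_ofReal_cpow (r := m₁) (by positivity) s ((m₂ : ℂ) / m₁)
  have hm₁_cpow : (m₁ : ℂ) ^ ((m₂ : ℂ) / m₁) ≠ 0 :=
    (cpow_ne_zero_iff_of_exponent_ne_zero (div_ne_zero hm₂' hm₁')).mpr hm₁'
  intro z
  rw [hψ_wright, hψ_wright, hψ_wright,
    show (z - m₁ - 1/2) / m₁ = (z - 1/2) / m₁ - 1 by field_simp; ring,
    show (z + m₂ - 1/2) / m₁ = (z - 1/2) / m₁ + (m₂ / m₁ : ℝ) by rw [hb]; ring,
    wright_sub_one _ _ (by positivity), cpow_sub _ _ (div_ne_zero hs hm₁'), cpow_one,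
    cpow_add _ _ (div_ne_zero hs hm₁'), hb, hpow, hx]
  field_simp
  ring
end

section
/- If an l×l matrix-valued function M(z,s) satisfies the topological difference equation of (m₁,m₂)-type, M(z−1,s)W(z,s;m₁,m₂) = W(z,s;m₁,m₂)M(z,s) with W invertible, then M̃(z,s) := η₁⁻¹ M(−z,−s) η₁ satisfies the topological difference equation of (m₂,m₁)-type: M̃(z−1,s)W(z,s;m₂,m₁) = W(z,s;m₂,m₁)M̃(z,s). -/
/-- The l×l matrix `W(z,s;m₁,m₂) = (z−1/2)e_{1,m₁} − s e_{1,l} + s ∑_{i=2}^l e_{i,i−1}`. -/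
noncomputable def Wmat (l m₁ : ℕ) (z s : ℂ) : Matrix (Fin l) (Fin l) ℂ :=
  Matrix.of fun i j =>
    (if (i : ℕ) = 0 ∧ (j : ℕ) + 1 = m₁ then z - 1/2 else 0) +
    (if (i : ℕ) = 0 ∧ (j : ℕ) + 1 = l then -s else 0) +
    (if (i : ℕ) = (j : ℕ) + 1 then s else 0)

/-- The antidiagonal permutation matrix `η₁ = ∑_{i=1}^l e_{i,l+1−i}`. -/
def eta1 (l : ℕ) : Matrix (Fin l) (Fin l) ℂ :=
  Matrix.of fun i j => if (i : ℕ) + (j : ℕ) + 1 = l then 1 else 0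

lemma eta1_mul {l : ℕ} (X : Matrix (Fin l) (Fin l) ℂ) :
    eta1 l * X = X.submatrix Fin.rev id := by
  ext i j
  rw [Matrix.mul_apply, Finset.sum_eq_single i.rev]
  · simp [eta1, Fin.val_rev]
    intro h; omega
  · intro k _ hk
    have : ¬((i : ℕ) + (k : ℕ) + 1 = l) := by
      intro h; apply hk; rw [Fin.ext_iff, Fin.val_rev]; omega
    simp [eta1, this]
  · simp

lemma mul_eta1 {l : ℕ} (X : Matrix (Fin l) (Fin l) ℂ) :
    X * eta1 l = X.submatrix id Fin.rev := by
  ext i j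
  rw [Matrix.mul_apply, Finset.sum_eq_single j.rev]
  · simp [eta1, Fin.val_rev]
    intro h; omega
  · intro k _ hk
    have : ¬((k : ℕ) + (j : ℕ) + 1 = l) := by
      intro h; apply hk; rw [Fin.ext_iff, Fin.val_rev]; omega
    simp [eta1, this]
  · simp

lemma eta1_sq {l : ℕ} : eta1 l * eta1 l = 1 := by
  rw [eta1_mul]
  ext i j
  have hi := i.isLt
  have hj := j.isLt
  simp only [Matrix.submatrix_apply, eta1, Matrix.of_apply, Matrix.one_apply, Fin.val_rev,
    id_eq, Fin.ext_iff]
  split_ifs with h1 h2 <;> first | rfl | (exfalso; omega)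

lemma key (m₁ m₂ : ℕ) (hm₁ : 0 < m₁) (hm₂ : 0 < m₂) (z s : ℂ) :
    Wmat (m₁ + m₂) m₁ (1 - z) (-s) * (eta1 (m₁ + m₂) * Wmat (m₁ + m₂) m₂ z s * eta1 (m₁ + m₂))
      = (-s ^ 2) • (1 : Matrix (Fin (m₁ + m₂)) (Fin (m₁ + m₂)) ℂ) := by
  rw [mul_eta1, eta1_mul, Matrix.submatrix_submatrix]
  set l := m₁ + m₂ with hl
  ext i j
  have hi := i.isLt
  have hj := j.isLt
  rw [Matrix.mul_apply]
  by_cases h0 : (i : ℕ) = 0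
  · have hab : (⟨m₁ - 1, by omega⟩ : Fin l) ≠ (⟨l - 1, by omega⟩ : Fin l) := by
      simp [Fin.ext_iff]; omega
    rw [← Finset.sum_subset (Finset.subset_univ {(⟨m₁ - 1, by omega⟩ : Fin l), ⟨l - 1, by omega⟩})
        (fun k _ hk => by
          simp only [Finset.mem_insert, Finset.mem_singleton, Fin.ext_iff] at hk
          push_neg at hk
          have h1 : ¬((k : ℕ) + 1 = m₁) := by omega
          have h2 : ¬((k : ℕ) + 1 = l) := by omega
          have h3 : ¬((i : ℕ) = (k : ℕ) + 1) := by omega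
          simp [Wmat, h1, h2, h3]),
      Finset.sum_pair hab]
    have d1 : m₁ - 1 + 1 = m₁ := by omega
    have d2 : ¬(m₁ - 1 + 1 = l) := by omega
    have d3 : ¬((0:ℕ) = m₁ - 1 + 1) := by omega
    have d4 : ¬(l - (m₁ - 1 + 1) = 0) := by omega
    have d5 : ¬(l - 1 + 1 = m₁) := by omega
    have d6 : l - 1 + 1 = l := by omega
    have d7 : ¬((0:ℕ) = l - 1 + 1) := by omega
    have d8 : l - (l - 1 + 1) = 0 := by omega
    have d9 : ¬((0:ℕ) = l - (↑j + 1) + 1) := by omega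
    simp only [Matrix.submatrix_apply, Wmat, Matrix.of_apply, Function.comp_apply, id_eq,
      Fin.val_rev, Fin.val_mk, Matrix.smul_apply, Matrix.one_apply, smul_eq_mul, Fin.ext_iff, h0]
    simp only [d1, d6]
    have e3 : ¬(l - m₁ = 0) := by omega
    simp [show ¬(m₁ = l) from by omega, show ¬((0:ℕ) = m₁) from by omega,
      show ¬((0:ℕ) = l) from by omega, e3, d9, Nat.sub_self]
    split_ifs <;> first | (exfalso; omega) | ring
  · rw [Finset.sum_eq_single (⟨(i : ℕ) - 1, by omega⟩ : Fin l)]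
    · simp only [Matrix.submatrix_apply, Wmat, Matrix.of_apply, Function.comp_apply, id_eq,
        Fin.val_rev, Fin.val_mk, Matrix.smul_apply, Matrix.one_apply, smul_eq_mul, Fin.ext_iff]
      have f1 : (i:ℕ) - 1 + 1 = (i:ℕ) := by omega
      simp only [f1]
      have f3 : ¬(l - (i:ℕ) = 0) := by omega
      simp [h0, f3]
      split_ifs <;> first | (exfalso; omega) | ring
    · intro k _ hk
      have h3 : ¬((i : ℕ) = (k : ℕ) + 1) := by
        intro h; apply hk; rw [Fin.ext_iff]; simp; omega
      simp [Wmat, h0, h3]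
    · simp

/-- If `M` satisfies the topological difference equation of `(m₁,m₂)`-type, then
`M̃(z,s) := η₁⁻¹ M(−z,−s) η₁` satisfies the TDE of `(m₂,m₁)`-type. -/
theorem TDE_symmetry_eta1 (m₁ m₂ : ℕ) (hm₁ : 0 < m₁) (hm₂ : 0 < m₂)
    (M : ℂ → ℂ → Matrix (Fin (m₁ + m₂)) (Fin (m₁ + m₂)) ℂ)
    (hM : ∀ z s : ℂ, M (z - 1) s * Wmat (m₁ + m₂) m₁ z s
      = Wmat (m₁ + m₂) m₁ z s * M z s) :
    ∀ z s : ℂ, s ≠ 0 →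
      ((eta1 (m₁ + m₂))⁻¹ * M (-(z - 1)) (-s) * eta1 (m₁ + m₂)) * Wmat (m₁ + m₂) m₂ z s =
        Wmat (m₁ + m₂) m₂ z s * ((eta1 (m₁ + m₂))⁻¹ * M (-z) (-s) * eta1 (m₁ + m₂)) := by
  intro z s hs
  set η := eta1 (m₁ + m₂) with hη
  set A := Wmat (m₁ + m₂) m₁ (1 - z) (-s) with hA
  set B := Wmat (m₁ + m₂) m₂ z s with hB
  have hηη : η * η = 1 := eta1_sq
  have hηinv : η⁻¹ = η := Matrix.inv_eq_right_inv hηη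
  have hcan : ∀ X : Matrix (Fin (m₁ + m₂)) (Fin (m₁ + m₂)) ℂ, η * (η * X) = X := by
    intro X; rw [← Matrix.mul_assoc, hηη, Matrix.one_mul]
  have hc : (-s ^ 2 : ℂ) ≠ 0 := by
    intro h
    apply hs
    have : s ^ 2 = 0 := by linear_combination -h
    exact pow_eq_zero_iff (n := 2) (by norm_num) |>.mp this
  set C : Matrix (Fin (m₁ + m₂)) (Fin (m₁ + m₂)) ℂ := (-s ^ 2)⁻¹ • (η * B * η) with hC
  have hAC : A * C = 1 := by
    rw [hC, Matrix.mul_smul, key m₁ m₂ hm₁ hm₂ z s, smul_smul, inv_mul_cancel₀ hc, one_smul]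
  have hCA : C * A = 1 := mul_eq_one_comm.mp hAC
  -- the difference equation at shifted arguments
  have hMA : M (-z) (-s) * A = A * M (-(z - 1)) (-s) := by
    have := hM (1 - z) (-s)
    rw [show (1 : ℂ) - z - 1 = -z by ring] at this
    rw [show -(z - 1) = 1 - z by ring]
    exact this
  have hMC : M (-(z - 1)) (-s) * C = C * M (-z) (-s) := by
    calc M (-(z - 1)) (-s) * C = (C * A) * M (-(z - 1)) (-s) * C := by rw [hCA, Matrix.one_mul]
    _ = C * (A * M (-(z - 1)) (-s)) * C := by rw [Matrix.mul_assoc C A _]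
    _ = C * (M (-z) (-s) * A) * C := by rw [hMA]
    _ = C * M (-z) (-s) * (A * C) := by simp only [Matrix.mul_assoc]
    _ = C * M (-z) (-s) := by rw [hAC, Matrix.mul_one]
  have hBC : (-s ^ 2) • (η * C * η) = B := by
    rw [hC, Matrix.mul_smul, Matrix.smul_mul, smul_smul, mul_inv_cancel₀ hc, one_smul]
    simp only [Matrix.mul_assoc]
    rw [hηη, Matrix.mul_one, hcan]
  rw [hηinv, ← hBC, Matrix.mul_smul, Matrix.smul_mul]
  congr 1
  simp only [Matrix.mul_assoc, hcan]
  have : M (-(z - 1)) (-s) * (C * η) = C * (M (-z) (-s) * η) := by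
    rw [← Matrix.mul_assoc, hMC, Matrix.mul_assoc]
  rw [this]
end
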